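/- Let μ_1, …, μ_n be matchings of a fixed assignment game, each endowed with its half price vector p^half_k, and let w_1, …, w_n ≥ 0 be weights summing to 1. Define the average utilities ū_i = Σ_k w_k·u_i(μ_k, p^half_k) and v̄_j = Σ_k w_k·v_j(μ_k, p^half_k), and the average subset instability SI^avg := max over subsets B' ⊆ B, S' ⊆ S and matchings μ' between B' and S' of SW(μ') − (Σ_{i∈B'} ū_i + Σ_{j∈S'} v̄_j). Then SI^avg ≤ OPT − (1/2)·Σ_k w_k·SW(μ_k); equivalently, when OPT > 0, (1/2)·Σ_k w_k·λ(μ_k) ≤ 1 − SI^avg/OPT. -/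

import Mathlib

open Finset

/-- A matching: a partial, injective assignment of buyers to sellers. -/
structure Matching (B S : Type*) where
  toFun : B → Option S
  inj : ∀ i i' j, toFun i = some j → toFun i' = some j → i = i'

variable {B S : Type*} [Fintype B] [Fintype S]

/-- Generated utility of a pair: `a i j = h i j - c j`. -/
def gain (h : B → S → ℝ) (c : S → ℝ) (i : B) (j : S) : ℝ := h i j - c j

/-- Social welfare of a matching. -/
def SW (h : B → S → ℝ) (c : S → ℝ) (μ : Matching B S) : ℝ :=
  ∑ i : B, ((μ.toFun i).elim 0 (fun j => gain h c i j))

/-- Buyer utility under an allocation. -/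
def buyerU (h : B → S → ℝ) (μ : Matching B S) (p : S → ℝ) (i : B) : ℝ :=
  (μ.toFun i).elim 0 (fun j => h i j - p j)

/-- Seller utility under an allocation. -/
def sellerU (c : S → ℝ) (p : S → ℝ) (j : S) : ℝ := p j - c j

/-- A seller is matched under `μ`. -/
def SellerMatched (μ : Matching B S) (j : S) : Prop := ∃ i, μ.toFun i = some j

/-- A valid price vector: nonnegative, and equal to the seller's valuation on
unmatched sellers. -/
def ValidPrices (c : S → ℝ) (μ : Matching B S) (p : S → ℝ) : Prop :=
  (∀ j, 0 ≤ p j) ∧ (∀ j, ¬ SellerMatched μ j → p j = c j)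

/-- Individual rationality of an allocation. -/
def IndivRational (h : B → S → ℝ) (c : S → ℝ) (μ : Matching B S) (p : S → ℝ) : Prop :=
  (∀ i, 0 ≤ buyerU h μ p i) ∧ (∀ j, 0 ≤ sellerU c p j)

/-- Stability of an allocation. -/
def Stable (h : B → S → ℝ) (c : S → ℝ) (μ : Matching B S) (p : S → ℝ) : Prop :=
  IndivRational h c μ p ∧ ∀ i j, gain h c i j ≤ buyerU h μ p i + sellerU c p j

/-- The optimal (maximum) social welfare over all matchings. -/
noncomputable def OPT (h : B → S → ℝ) (c : S → ℝ) : ℝ :=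
  sSup (Set.range (SW h c))

/-- `μ'` is a matching within the sub-market `(B', S')`. -/
def Within (B' : Finset B) (S' : Finset S) (μ' : Matching B S) : Prop :=
  ∀ i j, μ'.toFun i = some j → i ∈ B' ∧ j ∈ S'

/-- Subset instability of a pair of utility vectors `(u, v)`. -/
noncomputable def SIgen (h : B → S → ℝ) (c : S → ℝ) (u : B → ℝ) (v : S → ℝ) : ℝ :=
  sSup {x | ∃ (B' : Finset B) (S' : Finset S) (μ' : Matching B S),
    Within B' S' μ' ∧ x = SW h c μ' - ((∑ i ∈ B', u i) + (∑ j ∈ S', v j))}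

/-- Subset instability of an allocation. -/
noncomputable def SI (h : B → S → ℝ) (c : S → ℝ) (μ : Matching B S) (p : S → ℝ) : ℝ :=
  SIgen h c (buyerU h μ p) (sellerU c p)

open Classical in
/-- The half price vector: `c j + a i j / 2` for a seller `j` matched to `i`, and `c j`
for unmatched sellers. -/
noncomputable def halfPrice (h : B → S → ℝ) (c : S → ℝ) (μ : Matching B S) (j : S) : ℝ :=
  if hj : SellerMatched μ j then c j + gain h c hj.choose j / 2 else c j

/-!
Fix a matching `μ` with its half prices and a sub-market `(B', S', μ')`. Every `μ`-pair
`(i, j)` splits its gain equally between `i` and `j`, so if `i ∈ B'` or `j ∈ S'` it already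
pays at least half its gain into `∑_{B'} u + ∑_{S'} v`. The other `μ`-pairs avoid `B'` and `S'`,
hence can be grafted onto `μ'`, and the resulting matching has welfare at most `OPT`. Counting
buyer by buyer gives `SW μ' + SW μ / 2 ≤ OPT + ∑_{B'} u + ∑_{S'} v`, and this bound is preserved
by averaging utilities over matchings, since both sides are affine in them.
-/

open Finset

variable {h : B → S → ℝ} {c : S → ℝ}

section Matchings

omit [Fintype B] [Fintype S]

variable {μ : Matching B S} {i : B} {j : S}

lemma halfPrice_of_toFun_eq (hij : μ.toFun i = some j) :
    halfPrice h c μ j = c j + gain h c i j / 2 := by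
  have hj : SellerMatched μ j := ⟨i, hij⟩
  rw [halfPrice, dif_pos hj, μ.inj _ _ _ hj.choose_spec hij]

lemma halfPrice_of_not_sellerMatched (hj : ¬ SellerMatched μ j) : halfPrice h c μ j = c j :=
  dif_neg hj

lemma buyerU_halfPrice :
    buyerU h μ (halfPrice h c μ) i = (μ.toFun i).elim 0 (fun j => gain h c i j / 2) := by
  cases hi : μ.toFun i with
  | none => simp [buyerU, hi]
  | some j => simp only [buyerU, hi, Option.elim_some, halfPrice_of_toFun_eq hi, gain]; ring

lemma sellerU_halfPrice_of_toFun_eq (hij : μ.toFun i = some j) :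
    sellerU c (halfPrice h c μ) j = gain h c i j / 2 := by
  rw [sellerU, halfPrice_of_toFun_eq hij]; ring

lemma sellerU_halfPrice_of_not_sellerMatched (hj : ¬ SellerMatched μ j) :
    sellerU c (halfPrice h c μ) j = 0 := by
  rw [sellerU, halfPrice_of_not_sellerMatched hj, sub_self]

open Classical in
noncomputable def Matching.graft (μ' μ : Matching B S) {B' : Finset B} {S' : Finset S}
    (hW : Within B' S' μ') : Matching B S where
  toFun i := if i ∈ B' then μ'.toFun i else (μ.toFun i).filter (· ∉ S')
  inj i i' j hi hi' := by
    simp only [apply_ite (· = some j), Option.filter_eq_some_iff, decide_eq_true_eq] at hi hi'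
    split_ifs at hi hi'
    · exact μ'.inj _ _ _ hi hi'
    · exact absurd (hW i j hi).2 hi'.2
    · exact absurd (hW i' j hi').2 hi.2
    · exact μ.inj _ _ _ hi.1 hi'.1

open Classical in
lemma gain_add_half_le_graft (ha : ∀ i j, 0 ≤ gain h c i j) {μ' : Matching B S}
    {B' : Finset B} {S' : Finset S} (hW : Within B' S' μ') (i : B) :
    (μ'.toFun i).elim 0 (gain h c i) + (μ.toFun i).elim 0 (gain h c i) / 2
      ≤ ((μ'.graft μ hW).toFun i).elim 0 (gain h c i)
        + ((if i ∈ B' then buyerU h μ (halfPrice h c μ) i else 0)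
          + (μ.toFun i).elim 0 (fun j => if j ∈ S' then gain h c i j / 2 else 0)) := by
  by_cases hiB : i ∈ B'
  · simp only [Matching.graft, hiB, if_true, buyerU_halfPrice]
    cases μ.toFun i with
    | none => simp
    | some j => simp only [Option.elim_some]; split_ifs <;> linarith [ha i j]
  · have hμ'i : μ'.toFun i = none :=
      Option.eq_none_iff_forall_ne_some.2 fun j hij => hiB (hW i j hij).1
    simp only [Matching.graft, hiB, if_false, hμ'i, Option.elim_filter]
    cases μ.toFun i with
    | none => simp
    | some j =>
      simp only [Option.elim_none, Option.elim_some, decide_eq_true_eq]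
      split_ifs <;> linarith [ha i j]

end Matchings

instance : Finite (Matching B S) :=
  Finite.of_injective Matching.toFun fun μ ν hμν => by cases μ; cases ν; cases hμν; rfl

lemma SW_le_OPT (μ : Matching B S) : SW h c μ ≤ OPT h c :=
  le_csSup (Set.finite_range _).bddAbove ⟨μ, rfl⟩

lemma Matching.sum_eq_sum_elim {M : Type*} [AddCommMonoid M] (μ : Matching B S) (g : S → M)
    (hg : ∀ j, ¬ SellerMatched μ j → g j = 0) :
    ∑ j, g j = ∑ i, (μ.toFun i).elim 0 g := by
  classical
  have hcol : ∀ j, g j = ∑ i, if μ.toFun i = some j then g j else 0 := by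
    intro j
    by_cases hj : SellerMatched μ j
    · obtain ⟨i₀, hi₀⟩ := hj
      rw [sum_eq_single i₀ (fun i _ hi => if_neg fun hij => hi (μ.inj _ _ _ hij hi₀))
        (fun hi₀' => absurd (mem_univ i₀) hi₀'), if_pos hi₀]
    · simp [hg j hj]
  rw [sum_congr rfl fun j _ => hcol j, sum_comm]
  refine sum_congr rfl fun i _ => ?_
  cases μ.toFun i with
  | none => simp
  | some j => simp

open Classical in
lemma sum_sellerU_halfPrice (μ : Matching B S) (S' : Finset S) :
    ∑ j ∈ S', sellerU c (halfPrice h c μ) j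
      = ∑ i, (μ.toFun i).elim 0 (fun j => if j ∈ S' then gain h c i j / 2 else 0) := by
  rw [← univ_inter S', ← sum_ite_mem, μ.sum_eq_sum_elim]
  · refine sum_congr rfl fun i _ => ?_
    cases hi : μ.toFun i with
    | none => rfl
    | some j => simp only [Option.elim_some, sellerU_halfPrice_of_toFun_eq hi, univ_inter]
  · intro j hj
    simp [sellerU_halfPrice_of_not_sellerMatched hj]

lemma SW_add_half_le (ha : ∀ i j, 0 ≤ gain h c i j) (μ : Matching B S) {B' : Finset B}
    {S' : Finset S} {μ' : Matching B S} (hW : Within B' S' μ') :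
    SW h c μ' + SW h c μ / 2
      ≤ OPT h c + ((∑ i ∈ B', buyerU h μ (halfPrice h c μ) i)
        + ∑ j ∈ S', sellerU c (halfPrice h c μ) j) := by
  classical
  rw [← univ_inter B', ← sum_ite_mem, sum_sellerU_halfPrice, ← sum_add_distrib]
  refine le_trans ?_ (add_le_add_left (SW_le_OPT (μ'.graft μ hW)) _)
  simp only [SW, sum_div, ← sum_add_distrib]
  exact sum_le_sum fun i _ => gain_add_half_le_graft ha hW i

omit [Fintype S] in
lemma SIgen_le_of_forall {u : B → ℝ} {v : S → ℝ} {b : ℝ}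
    (hb : ∀ (B' : Finset B) (S' : Finset S) (μ' : Matching B S), Within B' S' μ' →
      SW h c μ' - ((∑ i ∈ B', u i) + ∑ j ∈ S', v j) ≤ b) :
    SIgen h c u v ≤ b := by
  refine csSup_le ⟨_, ∅, ∅, ⟨fun _ => none, by simp⟩, by simp [Within], rfl⟩ ?_
  rintro _ ⟨B', S', μ', hW, rfl⟩
  exact hb B' S' μ' hW

lemma SIgen_avg_halfPrice_le {ι : Type*} [Fintype ι] (ha : ∀ i j, 0 ≤ gain h c i j)
    (μs : ι → Matching B S) (w : ι → ℝ) (hw : ∀ k, 0 ≤ w k) (hw1 : ∑ k, w k = 1) :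
    SIgen h c (fun i => ∑ k, w k * buyerU h (μs k) (halfPrice h c (μs k)) i)
        (fun j => ∑ k, w k * sellerU c (halfPrice h c (μs k)) j)
      ≤ OPT h c - (1 / 2) * ∑ k, w k * SW h c (μs k) := by
  refine SIgen_le_of_forall fun B' S' μ' hW => ?_
  have havg := sum_le_sum fun k (_ : k ∈ univ) =>
    mul_le_mul_of_nonneg_left (SW_add_half_le ha (μs k) hW) (hw k)
  simp only [mul_add, sum_add_distrib, ← sum_mul, hw1, one_mul, mul_div_assoc', ← sum_div] at havg
  rw [sum_comm (s := B'), sum_comm (s := S')]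
  simp only [← mul_sum]
  linarith

theorem avg_half_price_guarantee_general
    {B S : Type*} [Fintype B] [Fintype S]
    (h : B → S → ℝ) (c : S → ℝ)
    (ha : ∀ i j, 0 ≤ gain h c i j)
    (n : ℕ) (μs : Fin n → Matching B S)
    (w : Fin n → ℝ) (hw : ∀ k, 0 ≤ w k) (hw1 : ∑ k, w k = 1) :
    SIgen h c (fun i => ∑ k, w k * buyerU h (μs k) (halfPrice h c (μs k)) i)
        (fun j => ∑ k, w k * sellerU c (halfPrice h c (μs k)) j)
      ≤ OPT h c - (1 / 2) * ∑ k, w k * SW h c (μs k) ∧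
    (0 < OPT h c →
      (1 / 2) * ∑ k, w k * (SW h c (μs k) / OPT h c)
        ≤ 1 - (SIgen h c (fun i => ∑ k, w k * buyerU h (μs k) (halfPrice h c (μs k)) i)
            (fun j => ∑ k, w k * sellerU c (halfPrice h c (μs k)) j)) / OPT h c) := by
  have hSI := SIgen_avg_halfPrice_le ha μs w hw hw1
  refine ⟨hSI, fun hOPT => ?_⟩
  simp only [mul_div_assoc', ← sum_div]
  rw [le_sub_iff_add_le, ← add_div, div_le_one hOPT]
  linarith

/-- Average stability guarantee of half prices: the subset instability of the
averaged half-price utilities is at most `OPT - (1/2)·(average social welfare)`;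
equivalently, half the averaged optimality ratio lower-bounds the average
stability index. -/
theorem avg_half_price_guarantee
    {B S : Type*} [Fintype B] [Fintype S]
    (h : B → S → ℝ) (c : S → ℝ)
    (hh : ∀ i j, 0 ≤ h i j) (hc : ∀ j, 0 ≤ c j)
    (ha : ∀ i j, 0 ≤ gain h c i j)
    (n : ℕ) (μs : Fin n → Matching B S)
    (w : Fin n → ℝ) (hw : ∀ k, 0 ≤ w k) (hw1 : ∑ k, w k = 1) :
    SIgen h c (fun i => ∑ k, w k * buyerU h (μs k) (halfPrice h c (μs k)) i)
        (fun j => ∑ k, w k * sellerU c (halfPrice h c (μs k)) j)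
      ≤ OPT h c - (1 / 2) * ∑ k, w k * SW h c (μs k) ∧
    (0 < OPT h c →
      (1 / 2) * ∑ k, w k * (SW h c (μs k) / OPT h c)
        ≤ 1 - (SIgen h c (fun i => ∑ k, w k * buyerU h (μs k) (halfPrice h c (μs k)) i)
            (fun j => ∑ k, w k * sellerU c (halfPrice h c (μs k)) j)) / OPT h c) :=
  avg_half_price_guarantee_general h c ha n μs w hw hw1
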